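/- The quasi-homomorphism Δ on a free group F with basis X (defined syllable-wise via the sign of differences of consecutive syllable exponents) vanishes on every palindrome: Δ(p) = 0 for all palindromes p with respect to X. -/

import Mathlib

/-!
Reversing a reduced word reverses its sequence of syllables, so the syllable lengths of a
palindrome form a palindromic list. The summand `sign (l - k)` is antisymmetric in the pair of
consecutive lengths `(k, l)`, so reading that list backwards negates the sum: `Δ p = -Δ p`.
-/

/-- `w` is a palindrome w.r.t. the basis `X`: its reduced word equals its reverse. -/
def IsPalindrome {X : Type*} [DecidableEq X] (w : FreeGroup X) : Prop :=
  w.toWord.reverse = w.toWord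

/-- The list of syllable lengths (exponent magnitudes) of the reduced word of `w`. -/
def syllableLengths {X : Type*} [DecidableEq X] (w : FreeGroup X) : List ℕ :=
  (w.toWord.splitBy (fun a b => a.1 == b.1)).map List.length

/-- The quasi-homomorphism `Δ`: the sum, over consecutive pairs of syllables
`a^{±k}`, `b^{±l}`, of `sign (l - k)`. -/
def delta {X : Type*} [DecidableEq X] (w : FreeGroup X) : ℤ :=
  ((syllableLengths w).zip (syllableLengths w).tail).foldl
    (fun acc p => acc + Int.sign ((p.2 : ℤ) - (p.1 : ℤ))) 0

namespace List

variable {α : Type*}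

theorem splitBy_reverse {r : α → α → Bool} (hr : ∀ a b, r a b = r b a) (l : List α) :
    l.reverse.splitBy r = ((l.splitBy r).map reverse).reverse := by
  rw [splitBy_eq_iff]
  refine ⟨by rw [← reverse_flatten, flatten_splitBy], by simp [nil_notMem_splitBy], ?_, ?_⟩
  · simp only [mem_reverse, mem_map]
    rintro _ ⟨m, hm, rfl⟩
    rw [isChain_reverse]
    exact (isChain_of_mem_splitBy hm).imp fun x y h => show r y x by rwa [hr]
  · rw [isChain_reverse, isChain_map]
    refine (isChain_getLast_head_splitBy r l).imp ?_
    rintro m m' ⟨hm, hm', h⟩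
    refine ⟨by simpa using hm', by simpa using hm, ?_⟩
    rwa [getLast_reverse, head_reverse, hr]

theorem zip_tail_reverse (l : List α) :
    l.reverse.zip l.reverse.tail = ((l.zip l.tail).map Prod.swap).reverse := by
  apply ext_getElem
  · simp
  · intro i h₁ h₂
    simp only [length_zip, length_reverse, length_tail] at h₁
    simp only [getElem_zip, getElem_tail, getElem_reverse, getElem_map, Prod.swap_prod_mk,
      length_map, length_zip, length_tail]
    congr 2 <;> omega

theorem sum_map_zip_tail_reverse {β : Type*} [AddCommGroup β] {f : α → α → β}
    (hf : ∀ a b, f b a = -f a b) (l : List α) :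
    ((l.reverse.zip l.reverse.tail).map fun p => f p.1 p.2).sum =
      -((l.zip l.tail).map fun p => f p.1 p.2).sum := by
  rw [zip_tail_reverse, map_reverse, sum_reverse, map_map, sum_neg, map_map]
  exact congrArg sum (map_congr_left fun p _ => hf p.1 p.2)

end List

section

variable {X : Type*} [DecidableEq X]

theorem delta_eq_sum (w : FreeGroup X) :
    delta w = (((syllableLengths w).zip (syllableLengths w).tail).map
      fun p => Int.sign ((p.2 : ℤ) - p.1)).sum := by
  rw [delta, List.sum_eq_foldl, List.foldl_map]

theorem IsPalindrome.reverse_syllableLengths {w : FreeGroup X} (hw : IsPalindrome w) :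
    (syllableLengths w).reverse = syllableLengths w := by
  conv_rhs => rw [syllableLengths, ← hw, List.splitBy_reverse fun a b => BEq.comm]
  simp [syllableLengths, Function.comp_def]

end

/-- `Δ` vanishes on palindromes. -/
theorem delta_palindrome {X : Type*} [DecidableEq X] (p : FreeGroup X)
    (hp : IsPalindrome p) : delta p = 0 := by
  have h := List.sum_map_zip_tail_reverse (f := fun k l : ℕ => Int.sign ((l : ℤ) - k))
    (fun k l => by rw [← Int.sign_neg, neg_sub]) (syllableLengths p)
  rw [hp.reverse_syllableLengths, ← delta_eq_sum] at h
  exact CharZero.neg_eq_self_iff.mp h.symm
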